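/- arXiv:2011.00645 — 3 statements merged into one kernel-verified Lean document; each statement's English description precedes it below -/
import Mathlib

section
/- Let Ω ⊂ ℝ² be a bounded region with piecewise smooth boundary ∂Ω with outward unit normal n, and let h be a C¹ positively homogeneous function of degree q > -2 with 0 ∉ ∂Ω. Then (2+q) ∫_Ω h dx = ∫_{∂Ω} (x · n) h ds. -/
open MeasureTheory

/-- The planar divergence of a vector field `F : ℝ² → ℝ²`. -/
noncomputable def div2 (F : ℝ × ℝ → ℝ × ℝ) (x : ℝ × ℝ) : ℝ :=
  (fderiv ℝ F x (1, 0)).1 + (fderiv ℝ F x (0, 1)).2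

/-- Dot product in the plane. -/
def dot2 (a b : ℝ × ℝ) : ℝ := a.1 * b.1 + a.2 * b.2

/-- Rotation of a planar vector by `-π/2`. -/
def perp2 (v : ℝ × ℝ) : ℝ × ℝ := (v.2, -v.1)

/-! Euler's theorem `x · ∇h = q h` for the homogeneous `h` gives `div (h x) = 2 h + x · ∇h = (2 + q) h`
away from the null set `{0}`, and the divergence theorem applied to the field `x ↦ h(x) x` turns
`∫_Ω (2 + q) h` into the flux `∫_{∂Ω} h (x · n) ds`. -/

theorem fderiv_apply_self_of_homogeneous {E : Type*} [NormedAddCommGroup E] [NormedSpace ℝ E]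
    {h : E → ℝ} {q : ℝ} {x : E} (hd : DifferentiableAt ℝ h x)
    (hhom : ∀ l : ℝ, 0 < l → h (l • x) = l ^ q * h x) :
    fderiv ℝ h x x = q * h x := by
  have hray : HasDerivAt (fun l : ℝ => h (l • x)) (fderiv ℝ h x x) 1 := by
    have hd' : HasFDerivAt h (fderiv ℝ h x) ((1 : ℝ) • x) := by
      simpa using hd.hasFDerivAt
    have hline : HasDerivAt (fun l : ℝ => l • x) x 1 := by
      simpa using (hasDerivAt_id (1 : ℝ)).smul_const x
    exact hd'.comp_hasDerivAt 1 hline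
  have hpow : HasDerivAt (fun l : ℝ => l ^ q * h x) (q * h x) 1 := by
    simpa using (Real.hasDerivAt_rpow_const (x := 1) (p := q) (Or.inl one_ne_zero)).mul_const (h x)
  have heq : (fun l : ℝ => h (l • x)) =ᶠ[nhds 1] fun l => l ^ q * h x :=
    Filter.eventually_of_mem (Ioi_mem_nhds one_pos) hhom
  exact hray.unique (hpow.congr_of_eventuallyEq heq)

theorem dot2_smul_left (a : ℝ) (v w : ℝ × ℝ) : dot2 (a • v) w = a * dot2 v w := by
  simp only [dot2, Prod.smul_fst, Prod.smul_snd, smul_eq_mul]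
  ring

theorem div2_smul_id {h : ℝ × ℝ → ℝ} {x : ℝ × ℝ} (hd : DifferentiableAt ℝ h x) :
    div2 (fun y => h y • y) x = 2 * h x + fderiv ℝ h x x := by
  have hfd : fderiv ℝ (fun y => h y • y) x
      = h x • ContinuousLinearMap.id ℝ (ℝ × ℝ) + (fderiv ℝ h x).smulRight x :=
    (hd.hasFDerivAt.smul (hasFDerivAt_id x)).fderiv
  set φ := fderiv ℝ h x
  have hlin : φ x = x.1 * φ (1, 0) + x.2 * φ (0, 1) := by
    conv_lhs => rw [show x = x.1 • ((1 : ℝ), (0 : ℝ)) + x.2 • ((0 : ℝ), (1 : ℝ)) by simp]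
    simp only [map_add, map_smul, smul_eq_mul]
  simp only [div2, hfd, add_apply, smul_apply,
    ContinuousLinearMap.id_apply, ContinuousLinearMap.smulRight_apply, Prod.fst_add,
    Prod.snd_add, Prod.smul_fst, Prod.smul_snd, smul_eq_mul]
  linarith

theorem div2_smul_id_of_homogeneous {h : ℝ × ℝ → ℝ} {q : ℝ} {x : ℝ × ℝ}
    (hd : DifferentiableAt ℝ h x) (hhom : ∀ l : ℝ, 0 < l → h (l • x) = l ^ q * h x) :
    div2 (fun y => h y • y) x = (2 + q) * h x := by
  rw [div2_smul_id hd, fderiv_apply_self_of_homogeneous hd hhom]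
  ring

theorem hni_identity_general
    (Ω : Set (ℝ × ℝ)) (h : ℝ × ℝ → ℝ) (q : ℝ) (c : ℝ → ℝ × ℝ)
    (hC1 : ContDiffOn ℝ 1 h {(0 : ℝ × ℝ)}ᶜ)
    (hhom : ∀ l : ℝ, 0 < l → ∀ x : ℝ × ℝ, x ≠ 0 → h (l • x) = l ^ q * h x)
    (hint : IntegrableOn h Ω volume)
    (hStokes : ∀ F : ℝ × ℝ → ℝ × ℝ, ContDiffOn ℝ 1 F {(0 : ℝ × ℝ)}ᶜ →
      IntegrableOn (div2 F) Ω volume →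
      ∫ x in Ω, div2 F x = ∫ t in (0:ℝ)..1, dot2 (F (c t)) (perp2 (deriv c t))) :
    (2 + q) * ∫ x in Ω, h x =
      ∫ t in (0:ℝ)..1, h (c t) * dot2 (c t) (perp2 (deriv c t)) := by
  have hdiv : div2 (fun y => h y • y) =ᵐ[volume.restrict Ω] fun x => (2 + q) * h x := by
    refine ae_restrict_of_ae ((Measure.ae_ne volume 0).mono fun x hx => ?_)
    have hd : DifferentiableAt ℝ h x :=
      (hC1.contDiffAt (isOpen_compl_singleton.mem_nhds hx)).differentiableAt one_ne_zero
    exact div2_smul_id_of_homogeneous hd fun l hl => hhom l hl x hx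
  have hflux := hStokes (fun y => h y • y) (hC1.smul contDiffOn_id)
    ((hint.const_mul (2 + q)).congr hdiv.symm)
  calc (2 + q) * ∫ x in Ω, h x
      = ∫ x in Ω, div2 (fun y => h y • y) x := by
        rw [integral_congr_ae hdiv, integral_const_mul]
    _ = ∫ t in (0:ℝ)..1, h (c t) * dot2 (c t) (perp2 (deriv c t)) := by
        simp only [hflux, dot2_smul_left]

/-- The homogeneous numerical integration (HNI) identity:
`(2+q) ∫_Ω h dx = ∫_{∂Ω} (x · n) h ds`, for a bounded region `Ω` whose
(piecewise smooth) boundary is parametrized counterclockwise by the `C¹` closed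
curve `c : [0,1] → ℝ²` (so that `(x · n) h ds = h(c t) (c t · c'⊥ t) dt`),
with `0 ∉ ∂Ω`, `q > -2`, and `h` a `C¹` positively homogeneous function of
degree `q` integrable over `Ω`.  The applicability of the divergence theorem on
`Ω` is encoded by the hypothesis `hStokes`. -/
theorem hni_identity
    (Ω : Set (ℝ × ℝ)) (h : ℝ × ℝ → ℝ) (q : ℝ) (c : ℝ → ℝ × ℝ)
    (hΩmeas : MeasurableSet Ω) (hΩbdd : Bornology.IsBounded Ω)
    (hq : -2 < q)
    (hc : ContDiff ℝ 1 c) (hclosed : c 0 = c 1)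
    (hbdry : c '' Set.Icc 0 1 = frontier Ω)
    (h0 : (0 : ℝ × ℝ) ∉ frontier Ω)
    (hC1 : ContDiffOn ℝ 1 h {(0 : ℝ × ℝ)}ᶜ)
    (hhom : ∀ l : ℝ, 0 < l → ∀ x : ℝ × ℝ, x ≠ 0 → h (l • x) = l ^ q * h x)
    (hint : IntegrableOn h Ω volume)
    (hStokes : ∀ F : ℝ × ℝ → ℝ × ℝ, ContDiffOn ℝ 1 F {(0 : ℝ × ℝ)}ᶜ →
      IntegrableOn (div2 F) Ω volume →
      ∫ x in Ω, div2 F x = ∫ t in (0:ℝ)..1, dot2 (F (c t)) (perp2 (deriv c t))) :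
    (2 + q) * ∫ x in Ω, h x =
      ∫ t in (0:ℝ)..1, h (c t) * dot2 (c t) (perp2 (deriv c t)) :=
  hni_identity_general Ω h q c hC1 hhom hint hStokes
end

section
/- Let T ⊂ ℝ² be a curved triangle with apex x₀, star-convex with respect to x₀, whose curved side is a C¹ curve c : [0,1] → ℝ² traversed counterclockwise, and suppose the map φ(ξ,t) = x₀ + ξ(c(t)-x₀) is injective on (0,1]×[0,1] onto T \ {x₀}. Then for any continuous integrable f : T → ℝ, ∫_T f(x) dx = ∫₀¹∫₀¹ f(φ(ξ,t)) · ξ · ((c(t)-x₀)·c'⊥(t)) dξ dt. -/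
/-! The pullback `φ(ξ,t) = x₀ + ξ (c t - x₀)` has Jacobian matrix with columns `c t - x₀` and
`ξ c'(t)`, whose determinant is `ξ (c t - x₀) · c'⊥(t)`; this is nonnegative on the parameter
square, so the change-of-variables formula for injective differentiable maps applies on
`(0,1] × [0,1]`, whose image misses only the null set `{x₀}` of `T`, and Fubini finishes. -/

open MeasureTheory

open Set

def scaledBoundaryMap {E : Type*} [AddCommGroup E] [Module ℝ E] (x₀ : E) (c : ℝ → E)
    (p : ℝ × ℝ) : E :=
  x₀ + p.1 • (c p.2 - x₀)

noncomputable def scaledBoundaryFDeriv {E : Type*} [NormedAddCommGroup E] [NormedSpace ℝ E]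
    (x₀ : E) (c : ℝ → E) (p : ℝ × ℝ) : ℝ × ℝ →L[ℝ] E :=
  (ContinuousLinearMap.fst ℝ ℝ ℝ).smulRight (c p.2 - x₀) +
    (ContinuousLinearMap.snd ℝ ℝ ℝ).smulRight (p.1 • deriv c p.2)

theorem hasFDerivAt_scaledBoundaryMap {E : Type*} [NormedAddCommGroup E] [NormedSpace ℝ E]
    (x₀ : E) {c : ℝ → E} {p : ℝ × ℝ} (hc : DifferentiableAt ℝ c p.2) :
    HasFDerivAt (scaledBoundaryMap x₀ c) (scaledBoundaryFDeriv x₀ c p) p := by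
  have hshift : HasFDerivAt (fun p : ℝ × ℝ => c p.2 - x₀)
      ((ContinuousLinearMap.smulRight 1 (deriv c p.2)).comp (ContinuousLinearMap.snd ℝ ℝ ℝ)) p :=
    (hc.hasDerivAt.hasFDerivAt.comp p hasFDerivAt_snd).sub_const x₀
  refine ((hasFDerivAt_fst.smul hshift).const_add x₀).congr_fderiv ?_
  ext <;> simp [scaledBoundaryFDeriv, smul_smul, mul_comm]

theorem det_scaledBoundaryFDeriv (x₀ : ℝ × ℝ) (c : ℝ → ℝ × ℝ) (p : ℝ × ℝ) :
    (scaledBoundaryFDeriv x₀ c p).det = p.1 * dot2 (c p.2 - x₀) (perp2 (deriv c p.2)) := by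
  rw [ContinuousLinearMap.det, ← LinearMap.det_toMatrix (Module.Basis.finTwoProd ℝ),
    Matrix.det_fin_two]
  simp [scaledBoundaryFDeriv, LinearMap.toMatrix_apply, dot2, perp2]
  ring

theorem setIntegral_Ioc_prod_Icc {E : Type*} [NormedAddCommGroup E] [NormedSpace ℝ E]
    {a b c d : ℝ} (hab : a ≤ b) (hcd : c ≤ d) {G : ℝ × ℝ → E}
    (hG : IntegrableOn G (Ioc a b ×ˢ Icc c d)) :
    ∫ p in Ioc a b ×ˢ Icc c d, G p = ∫ t in c..d, ∫ ξ in a..b, G (ξ, t) := by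
  rw [Measure.volume_eq_prod, ← Measure.prod_restrict,
    integral_prod_symm G (by rwa [Measure.prod_restrict, ← Measure.volume_eq_prod]),
    Measure.restrict_congr_set Ioc_ae_eq_Icc.symm, intervalIntegral.integral_of_le hcd]
  simp only [intervalIntegral.integral_of_le hab]

theorem sbc_change_of_variables_general
    (T : Set (ℝ × ℝ)) (x₀ : ℝ × ℝ) (c : ℝ → ℝ × ℝ) (f : ℝ × ℝ → ℝ)
    (hc : ContDiff ℝ 1 c)
    (hccw : ∀ t ∈ Set.Icc (0:ℝ) 1, 0 ≤ dot2 (c t - x₀) (perp2 (deriv c t)))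
    (hinj : Set.InjOn (fun p : ℝ × ℝ => x₀ + p.1 • (c p.2 - x₀))
      (Set.Ioc (0:ℝ) 1 ×ˢ Set.Icc (0:ℝ) 1))
    (himage : (fun p : ℝ × ℝ => x₀ + p.1 • (c p.2 - x₀)) ''
      (Set.Ioc (0:ℝ) 1 ×ˢ Set.Icc (0:ℝ) 1) = T \ {x₀})
    (hint : IntegrableOn f T volume) :
    ∫ x in T, f x =
      ∫ t in (0:ℝ)..1, ∫ ξ in (0:ℝ)..1,
        f (x₀ + ξ • (c t - x₀)) * ξ * dot2 (c t - x₀) (perp2 (deriv c t)) := by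
  set s := Ioc (0:ℝ) 1 ×ˢ Icc (0:ℝ) 1
  have hs : MeasurableSet s := measurableSet_Ioc.prod measurableSet_Icc
  have hφ : ∀ p ∈ s,
      HasFDerivWithinAt (scaledBoundaryMap x₀ c) (scaledBoundaryFDeriv x₀ c p) s p := fun p _ =>
    (hasFDerivAt_scaledBoundaryMap x₀ (hc.differentiable one_ne_zero p.2)).hasFDerivWithinAt
  have hjac : ∀ p ∈ s, |(scaledBoundaryFDeriv x₀ c p).det| • f (scaledBoundaryMap x₀ c p) =
      f (x₀ + p.1 • (c p.2 - x₀)) * p.1 * dot2 (c p.2 - x₀) (perp2 (deriv c p.2)) := by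
    rintro ⟨ξ, t⟩ ⟨hξ, ht⟩
    rw [det_scaledBoundaryFDeriv, abs_of_nonneg (mul_nonneg hξ.1.le (hccw t ht)), smul_eq_mul,
      scaledBoundaryMap]
    ring
  have hφ_image : scaledBoundaryMap x₀ c '' s = T \ {x₀} := himage
  have hint' : IntegrableOn f (scaledBoundaryMap x₀ c '' s) :=
    hφ_image ▸ hint.mono_set sdiff_subset
  calc ∫ x in T, f x = ∫ x in scaledBoundaryMap x₀ c '' s, f x := by
        rw [hφ_image]
        exact setIntegral_congr_set (sdiff_null_ae_eq_self (measure_singleton x₀)) |>.symm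
    _ = ∫ p in s,
          f (x₀ + p.1 • (c p.2 - x₀)) * p.1 * dot2 (c p.2 - x₀) (perp2 (deriv c p.2)) := by
        rw [integral_image_eq_integral_abs_det_fderiv_smul volume hs hφ hinj]
        exact setIntegral_congr_fun hs hjac
    _ = _ := setIntegral_Ioc_prod_Icc zero_le_one zero_le_one
        (((integrableOn_image_iff_integrableOn_abs_det_fderiv_smul volume hs hφ hinj f).1
          hint').congr_fun hjac hs)

/-- The scaled boundary cubature change-of-variables formula over a curved
triangle `T` with apex `x₀`, star-convex with respect to `x₀`, whose curved
side is a `C¹` curve `c` traversed counterclockwise (nonnegative Jacobian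
factor), with `φ(ξ,t) = x₀ + ξ(c(t)-x₀)` injective on `(0,1] × [0,1]` onto
`T \ {x₀}`:  `∫_T f = ∫₀¹∫₀¹ f(φ(ξ,t)) ξ ((c(t)-x₀)·c'⊥(t)) dξ dt`. -/
theorem sbc_change_of_variables
    (T : Set (ℝ × ℝ)) (x₀ : ℝ × ℝ) (c : ℝ → ℝ × ℝ) (f : ℝ × ℝ → ℝ)
    (hTmeas : MeasurableSet T)
    (hstar : StarConvex ℝ x₀ T)
    (hc : ContDiff ℝ 1 c)
    (hccw : ∀ t ∈ Set.Icc (0:ℝ) 1, 0 ≤ dot2 (c t - x₀) (perp2 (deriv c t)))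
    (hinj : Set.InjOn (fun p : ℝ × ℝ => x₀ + p.1 • (c p.2 - x₀))
      (Set.Ioc (0:ℝ) 1 ×ˢ Set.Icc (0:ℝ) 1))
    (himage : (fun p : ℝ × ℝ => x₀ + p.1 • (c p.2 - x₀)) ''
      (Set.Ioc (0:ℝ) 1 ×ˢ Set.Icc (0:ℝ) 1) = T \ {x₀})
    (hf : ContinuousOn f T)
    (hint : IntegrableOn f T volume) :
    ∫ x in T, f x =
      ∫ t in (0:ℝ)..1, ∫ ξ in (0:ℝ)..1,
        f (x₀ + ξ • (c t - x₀)) * ξ * dot2 (c t - x₀) (perp2 (deriv c t)) :=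
  sbc_change_of_variables_general T x₀ c f hc hccw hinj himage hint
end

section
/- Let h : ℝ² → ℝ be continuous. Then for all x ∈ ℝ², h(x) = div_x [∫₀¹ h(ξx) ξ x dξ], where the divergence is taken with respect to x (Poincaré Lemma for vector fields in the plane), provided h is C¹. -/
open MeasureTheory

open Metric Set intervalIntegral

theorem hasFDerivAt_intervalIntegral_of_contDiff {E G : Type*}
    [NormedAddCommGroup E] [NormedSpace ℝ E] [ProperSpace E]
    [NormedAddCommGroup G] [NormedSpace ℝ G]
    {f : E × ℝ → G} (hf : ContDiff ℝ 1 f) (a b : ℝ) (x : E) :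
    HasFDerivAt (fun y => ∫ t in a..b, f (y, t))
      (∫ t in a..b, (fderiv ℝ f (x, t)).comp (ContinuousLinearMap.inl ℝ E ℝ)) x := by
  have hf' : Continuous fun p : E × ℝ => (fderiv ℝ f p).comp (ContinuousLinearMap.inl ℝ E ℝ) :=
    (hf.continuous_fderiv one_ne_zero).clm_comp continuous_const
  have hslice : ∀ y, Continuous fun t => f (y, t) := fun y => hf.continuous.comp (by fun_prop)
  obtain ⟨C, hC⟩ := ((isCompact_closedBall x 1).prod isCompact_uIcc).exists_bound_of_continuousOn
    hf'.continuousOn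
  refine hasFDerivAt_integral_of_dominated_of_fderiv_le (bound := fun _ => C)
    (ball_mem_nhds x one_pos) (.of_forall fun y => (hslice y).aestronglyMeasurable)
    ((hslice x).intervalIntegrable a b) (hf'.comp (by fun_prop)).aestronglyMeasurable
    (.of_forall fun t ht y hy => hC (y, t) ⟨ball_subset_closedBall hy, uIoc_subset_uIcc ht⟩)
    intervalIntegrable_const (.of_forall fun t _ y _ => ?_)
  exact ((hf.differentiable one_ne_zero (y, t)).hasFDerivAt).comp y (hasFDerivAt_prodMk_left y t)

theorem div2_smul_self {g : ℝ × ℝ → ℝ} {x : ℝ × ℝ} (hg : DifferentiableAt ℝ g x) :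
    div2 (fun y => g y • y) x = 2 * g x + fderiv ℝ g x x := by
  rw [div2, fderiv_fun_smul hg differentiableAt_fun_id, fderiv_fun_id]
  set L := fderiv ℝ g x
  have hx : x = x.1 • ((1 : ℝ), (0 : ℝ)) + x.2 • ((0 : ℝ), (1 : ℝ)) := by simp
  have hL : L x = x.1 * L (1, 0) + x.2 * L (0, 1) := by
    conv_lhs => rw [hx]
    simp only [map_add, map_smul, smul_eq_mul]
  simp only [add_apply, smul_apply, ContinuousLinearMap.id_apply, ContinuousLinearMap.smulRight_apply,
    Prod.fst_add, Prod.snd_add, Prod.smul_fst, Prod.smul_snd, smul_eq_mul, mul_one, hL]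
  ring

theorem hasDerivAt_pow_mul_comp_smul {E : Type*} [NormedAddCommGroup E] [NormedSpace ℝ E]
    {g : E → ℝ} {x : E} (hg : DifferentiableAt ℝ g x) (n : ℕ) :
    HasDerivAt (fun s : ℝ => s ^ n * g (s • x)) (n * g x + fderiv ℝ g x x) 1 := by
  have hline : HasDerivAt (fun s : ℝ => g (s • x)) (fderiv ℝ g x x) 1 := by
    have hs : HasDerivAt (fun s : ℝ => s • x) x 1 := by
      simpa using (hasDerivAt_id (1 : ℝ)).smul_const x
    exact hg.hasFDerivAt.comp_hasDerivAt_of_eq 1 hs (one_smul ℝ x).symm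
  simpa using (hasDerivAt_pow n (1 : ℝ)).fun_mul hline

theorem sq_mul_integral_mul_comp_smul {E : Type*} [AddCommGroup E] [Module ℝ E]
    (h : E → ℝ) (x : E) (s : ℝ) :
    s ^ 2 * ∫ t in (0 : ℝ)..1, t * h (t • s • x) = ∫ u in (0 : ℝ)..s, u * h (u • x) := by
  have hsub := smul_integral_comp_mul_left (fun u => u * h (u • x)) s (a := 0) (b := 1)
  simp only [smul_eq_mul, mul_zero, mul_one] at hsub
  rw [← hsub, pow_two, mul_assoc, ← intervalIntegral.integral_const_mul]
  congr 2 with t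
  rw [smul_smul, mul_comm t s]
  ring

/-- Poincaré Lemma for vector fields in the plane: for `h : ℝ² → ℝ` of class
`C¹`, `h(x) = div [∫₀¹ h(ξ x) ξ x dξ]` for all `x`. -/
theorem poincare_lemma_vector_field
    (h : ℝ × ℝ → ℝ) (hC1 : ContDiff ℝ 1 h) :
    ∀ x : ℝ × ℝ,
      div2 (fun y => ∫ ξ in (0:ℝ)..1, (ξ * h (ξ • y)) • y) x = h x := by
  intro x
  set g : ℝ × ℝ → ℝ := fun y => ∫ t in (0 : ℝ)..1, t * h (t • y)
  have hF : (fun y => ∫ ξ in (0 : ℝ)..1, (ξ * h (ξ • y)) • y) = fun y => g y • y :=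
    funext fun y => intervalIntegral.integral_smul_const _ y
  have hg : DifferentiableAt ℝ g x :=
    (hasFDerivAt_intervalIntegral_of_contDiff (f := fun p : (ℝ × ℝ) × ℝ => p.2 * h (p.2 • p.1))
      (by fun_prop) 0 1 x).differentiableAt
  have hEuler := hasDerivAt_pow_mul_comp_smul hg 2
  rw [funext (sq_mul_integral_mul_comp_smul h x)] at hEuler
  have hFTC := ((show Continuous fun u : ℝ => u * h (u • x) by
    have := hC1.continuous; fun_prop).integral_hasStrictDerivAt 0 1).hasDerivAt
  rw [hF, div2_smul_self hg]
  simpa using hEuler.unique hFTC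
end
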